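/- arXiv:1902.02640 — 3 statements merged into one kernel-verified Lean document; each statement's English description precedes it below -/
import Mathlib

section
/- A Hermitian tensor H of order 2m on ℂ^{n_1} ⊗ ⋯ ⊗ ℂ^{n_m} is nonnegative (i.e. H(x) ≥ 0 for all unit vectors x_1 ∈ ℂ^{n_1},…,x_m ∈ ℂ^{n_m}) if and only if every Hermitian eigenvalue of H is greater than or equal to zero. -/
open scoped ComplexOrder
/-- The conjugate polynomial `H(x)` associated to an order-`2m` tensor `H`. -/
noncomputable def tensorPoly {m : ℕ} {n : Fin m → ℕ}
    (H : ((k : Fin m) → Fin (n k)) → ((k : Fin m) → Fin (n k)) → ℂ)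
    (x : (k : Fin m) → Fin (n k) → ℂ) : ℂ :=
  ∑ i : (k : Fin m) → Fin (n k), ∑ j : (k : Fin m) → Fin (n k),
    starRingEnd ℂ (H i j) * ((∏ k, x k (i k)) * ∏ k, starRingEnd ℂ (x k (j k)))

/-- `(λ; u₁, …, u_m)` is a Hermitian eigentuple of `H`: the `u_k` are unit vectors
and for every mode `k` and every index `a`,
`Σ_{I, J : J k = a} conj(H I J) ∏ₗ uₗ(Iₗ) ∏_{l ≠ k} conj(uₗ(Jₗ)) = λ · u_k a`. -/
def IsHermitianEigentuple {m : ℕ} {n : Fin m → ℕ}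
    (H : ((k : Fin m) → Fin (n k)) → ((k : Fin m) → Fin (n k)) → ℂ)
    (lam : ℂ) (u : (k : Fin m) → Fin (n k) → ℂ) : Prop :=
  (∀ k, ∑ a, Complex.normSq (u k a) = 1) ∧
  ∀ (k : Fin m) (a : Fin (n k)),
    (∑ i : (l : Fin m) → Fin (n l), ∑ j : (l : Fin m) → Fin (n l),
      if j k = a then
        starRingEnd ℂ (H i j) * ((∏ l, u l (i l)) *
          ∏ l ∈ Finset.univ.erase k, starRingEnd ℂ (u l (j l)))
      else 0) = lam * u k a

section aux
variable {m : ℕ} {n : Fin m → ℕ}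
  (H : ((k : Fin m) → Fin (n k)) → ((k : Fin m) → Fin (n k)) → ℂ)

lemma tensorPoly_conj (hH : ∀ i j, H i j = starRingEnd ℂ (H j i))
    (x : (k : Fin m) → Fin (n k) → ℂ) :
    starRingEnd ℂ (tensorPoly H x) = tensorPoly H x := by
  unfold tensorPoly
  simp only [map_sum, map_mul, map_prod, Complex.conj_conj]
  rw [Finset.sum_comm]
  refine Finset.sum_congr rfl fun a _ => Finset.sum_congr rfl fun b _ => ?_
  rw [hH b a]
  ring

/-- coefficient-style mode map -/
noncomputable def modeMapFun (u : (k : Fin m) → Fin (n k) → ℂ) (k : Fin m)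
    (v : Fin (n k) → ℂ) (a : Fin (n k)) : ℂ :=
  ∑ i : (l : Fin m) → Fin (n l), ∑ j : (l : Fin m) → Fin (n l),
    (if j k = a then
      starRingEnd ℂ (H i j) * ((∏ l ∈ Finset.univ.erase k, u l (i l)) *
        ∏ l ∈ Finset.univ.erase k, starRingEnd ℂ (u l (j l)))
    else 0) * v (i k)

noncomputable def modeMap (u : (k : Fin m) → Fin (n k) → ℂ) (k : Fin m) :
    EuclideanSpace ℂ (Fin (n k)) →L[ℂ] EuclideanSpace ℂ (Fin (n k)) :=
  LinearMap.toContinuousLinearMap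
  { toFun := fun v => WithLp.toLp 2 (modeMapFun H u k (WithLp.ofLp v))
    map_add' := by
      intro v w
      ext a
      unfold modeMapFun
      simp [mul_add, Finset.sum_add_distrib]
    map_smul' := by
      intro c v
      ext a
      unfold modeMapFun
      simp only [RingHom.id_apply, PiLp.smul_apply, smul_eq_mul, Finset.mul_sum]
      refine Finset.sum_congr rfl fun i _ => Finset.sum_congr rfl fun j _ => ?_
      ring }

lemma modeMap_apply (u : (k : Fin m) → Fin (n k) → ℂ) (k : Fin m)
    (v : EuclideanSpace ℂ (Fin (n k))) (a : Fin (n k)) :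
    modeMap H u k v a = modeMapFun H u k v a := rfl

lemma inner_modeMap (u : (k : Fin m) → Fin (n k) → ℂ) (k : Fin m)
    (w v : EuclideanSpace ℂ (Fin (n k))) :
    (inner ℂ w (modeMap H u k v) : ℂ) =
      ∑ i : (l : Fin m) → Fin (n l), ∑ j : (l : Fin m) → Fin (n l),
        starRingEnd ℂ (H i j) *
          (((∏ l ∈ Finset.univ.erase k, u l (i l)) * v (i k)) *
           ((∏ l ∈ Finset.univ.erase k, starRingEnd ℂ (u l (j l))) *
             starRingEnd ℂ (w (j k)))) := by
  simp only [PiLp.inner_apply, RCLike.inner_apply', modeMap_apply, modeMapFun]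
  simp only [Finset.mul_sum]
  rw [Finset.sum_comm]
  refine Finset.sum_congr rfl fun i _ => ?_
  rw [Finset.sum_comm]
  refine Finset.sum_congr rfl fun j _ => ?_
  simp only [ite_mul, zero_mul, mul_ite, mul_zero]
  rw [Finset.sum_ite_eq]
  simp only [Finset.mem_univ, if_true]
  ring

end aux


section aux2
variable {m : ℕ} {n : Fin m → ℕ}
  (H : ((k : Fin m) → Fin (n k)) → ((k : Fin m) → Fin (n k)) → ℂ)

lemma modeMap_symm (hH : ∀ i j, H i j = starRingEnd ℂ (H j i))
    (u : (k : Fin m) → Fin (n k) → ℂ) (k : Fin m) :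
    IsSelfAdjoint (modeMap H u k) := by
  rw [ContinuousLinearMap.isSelfAdjoint_iff_isSymmetric]
  intro w v
  show (inner ℂ (modeMap H u k w) v : ℂ) = inner ℂ w (modeMap H u k v)
  rw [← inner_conj_symm, inner_modeMap, inner_modeMap]
  simp only [map_sum, map_mul, map_prod, Complex.conj_conj]
  rw [Finset.sum_comm]
  refine Finset.sum_congr rfl fun i _ => Finset.sum_congr rfl fun j _ => ?_
  rw [hH j i]
  ring

lemma tensorPoly_update (u : (k : Fin m) → Fin (n k) → ℂ) (k : Fin m)
    (v : EuclideanSpace ℂ (Fin (n k))) :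
    (inner ℂ v (modeMap H u k v) : ℂ) = tensorPoly H (Function.update u k v) := by
  rw [inner_modeMap]
  unfold tensorPoly
  refine Finset.sum_congr rfl fun i _ => Finset.sum_congr rfl fun j _ => ?_
  rw [← Finset.mul_prod_erase Finset.univ _ (Finset.mem_univ k),
      ← Finset.mul_prod_erase Finset.univ
        (fun l => starRingEnd ℂ (Function.update u k v l (j l))) (Finset.mem_univ k)]
  rw [Function.update_self]
  have h1 : (∏ l ∈ Finset.univ.erase k, Function.update u k v l (i l))
      = ∏ l ∈ Finset.univ.erase k, u l (i l) :=
    Finset.prod_congr rfl fun l hl => by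
      rw [Function.update_of_ne (Finset.ne_of_mem_erase hl)]
  have h2 : (∏ l ∈ Finset.univ.erase k, starRingEnd ℂ (Function.update u k v l (j l)))
      = ∏ l ∈ Finset.univ.erase k, starRingEnd ℂ (u l (j l)) :=
    Finset.prod_congr rfl fun l hl => by
      rw [Function.update_of_ne (Finset.ne_of_mem_erase hl)]
  rw [h1, h2]
  ring

lemma modeMap_self (u : (k : Fin m) → Fin (n k) → ℂ) (k : Fin m) (a : Fin (n k)) :
    (∑ i : (l : Fin m) → Fin (n l), ∑ j : (l : Fin m) → Fin (n l),
      if j k = a then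
        starRingEnd ℂ (H i j) * ((∏ l, u l (i l)) *
          ∏ l ∈ Finset.univ.erase k, starRingEnd ℂ (u l (j l)))
      else 0) = modeMap H u k (WithLp.toLp 2 (u k)) a := by
  rw [modeMap_apply]
  unfold modeMapFun
  refine Finset.sum_congr rfl fun i _ => Finset.sum_congr rfl fun j _ => ?_
  rw [← Finset.mul_prod_erase Finset.univ (fun l => u l (i l)) (Finset.mem_univ k)]
  split_ifs with h
  · ring
  · simp

end aux2


section aux3
variable {m : ℕ} {n : Fin m → ℕ}
  (H : ((k : Fin m) → Fin (n k)) → ((k : Fin m) → Fin (n k)) → ℂ)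

def toE {N : ℕ} (v : Fin N → ℂ) : EuclideanSpace ℂ (Fin N) := WithLp.toLp 2 v

lemma euclid_normSq {N : ℕ} (v : EuclideanSpace ℂ (Fin N)) :
    ∑ a, Complex.normSq (v a) = ‖v‖ ^ 2 := by
  rw [EuclideanSpace.norm_eq, Real.sq_sqrt (Finset.sum_nonneg fun a _ => sq_nonneg _)]
  refine Finset.sum_congr rfl fun a _ => ?_
  rw [← Complex.sq_norm]

lemma reApply_eq (u : (k : Fin m) → Fin (n k) → ℂ) (k : Fin m)
    (v : EuclideanSpace ℂ (Fin (n k))) :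
    (modeMap H u k).reApplyInnerSelf v = (tensorPoly H (Function.update u k v)).re := by
  rw [ContinuousLinearMap.reApplyInnerSelf_apply, ← inner_conj_symm, tensorPoly_update]
  simp [Complex.conj_re]

end aux3


/-- A Hermitian tensor `H` is nonnegative (`H(x) ≥ 0` for all unit
vectors `x₁, …, x_m`) if and only if all its Hermitian eigenvalues are `≥ 0`. -/
theorem stmt_13 {m : ℕ} {n : Fin m → ℕ}
    (H : ((k : Fin m) → Fin (n k)) → ((k : Fin m) → Fin (n k)) → ℂ)
    (hH : ∀ i j, H i j = starRingEnd ℂ (H j i))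
    (hm : 0 < m) :
    (∀ x : (k : Fin m) → Fin (n k) → ℂ,
        (∀ k, ∑ a, Complex.normSq (x k a) = 1) → 0 ≤ tensorPoly H x) ↔
      (∀ (lam : ℂ) (u : (k : Fin m) → Fin (n k) → ℂ),
        IsHermitianEigentuple H lam u → 0 ≤ lam) := by
  constructor
  · -- forward
    intro hpos lam u hu
    obtain ⟨hunit, heig⟩ := hu
    set k : Fin m := ⟨0, hm⟩ with hk
    have h2 : tensorPoly H u =
        ∑ a, starRingEnd ℂ (u k a) * modeMap H u k (WithLp.toLp 2 (u k)) a := by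
      have := tensorPoly_update H u k (WithLp.toLp 2 (u k))
      rw [Function.update_eq_self] at this
      rw [← this]
      simp [PiLp.inner_apply, RCLike.inner_apply, mul_comm]
    have h3 : tensorPoly H u = lam := by
      rw [h2]
      have : ∀ a, (modeMap H u k (WithLp.toLp 2 (u k)) a : ℂ) = lam * u k a := by
        intro a
        rw [← modeMap_self H u k a]
        exact heig k a
      rw [Finset.sum_congr rfl fun a _ => by rw [this a]]
      calc ∑ a, starRingEnd ℂ (u k a) * (lam * u k a)
          = lam * ∑ a, ((Complex.normSq (u k a) : ℝ) : ℂ) := by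
            rw [Finset.mul_sum]
            refine Finset.sum_congr rfl fun a _ => ?_
            rw [Complex.normSq_eq_conj_mul_self]
            ring
        _ = lam := by
            rw [← Complex.ofReal_sum, hunit k]
            simp
    rw [← h3]
    exact hpos u hunit
  · -- backward
    intro hev x hx
    have hxim : (tensorPoly H x).im = 0 := by
      have := tensorPoly_conj H hH x
      rwa [Complex.conj_eq_iff_im] at this
    -- the sphere set in each factor
    set T : (k : Fin m) → Set (Fin (n k) → ℂ) :=
      fun k => {v | ∑ a, Complex.normSq (v a) = 1} with hT
    have hTcont : ∀ k, Continuous fun v : Fin (n k) → ℂ =>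
        ∑ a, Complex.normSq (v a) := fun k =>
      continuous_finset_sum _ fun a _ =>
        Complex.continuous_normSq.comp (continuous_apply a)
    have hTcompact : ∀ k, IsCompact (T k) := by
      intro k
      apply Metric.isCompact_of_isClosed_isBounded
      · exact isClosed_eq (hTcont k) continuous_const
      · refine (Metric.isBounded_closedBall (x := (0 : Fin (n k) → ℂ)) (r := 1)).subset ?_
        intro v hv
        rw [Metric.mem_closedBall, dist_zero_right]
        refine (pi_norm_le_iff_of_nonneg zero_le_one).mpr fun a => ?_
        have h1 : Complex.normSq (v a) ≤ 1 := by
          rw [← hv]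
          exact Finset.single_le_sum (fun b _ => Complex.normSq_nonneg _) (Finset.mem_univ a)
        have h2 : ‖v a‖ ^ 2 = Complex.normSq (v a) := Complex.sq_norm _
        nlinarith [norm_nonneg (v a)]
    have hScompact : IsCompact (Set.univ.pi T) := isCompact_univ_pi hTcompact
    have hSne : (Set.univ.pi T).Nonempty := ⟨x, fun k _ => hx k⟩
    have hcont : Continuous fun y : (k : Fin m) → Fin (n k) → ℂ => tensorPoly H y := by
      unfold tensorPoly
      refine continuous_finset_sum _ fun i _ => continuous_finset_sum _ fun j _ => ?_
      exact continuous_const.mul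
        (((continuous_finset_prod _ fun k _ =>
            (continuous_apply (i k)).comp (continuous_apply k))).mul
          (continuous_finset_prod _ fun k _ =>
            Complex.continuous_conj.comp
              ((continuous_apply (j k)).comp (continuous_apply k))))
    obtain ⟨u, huS, humin⟩ := hScompact.exists_isMinOn hSne
      ((Complex.continuous_re.comp hcont).continuousOn)
    have huS' : ∀ k, ∑ a, Complex.normSq (u k a) = 1 := fun k =>
      huS k (Set.mem_univ k)
    have hukn : ∀ k : Fin m, ‖toE (u k)‖ = 1 := by
      intro k
      have h := (euclid_normSq (toE (u k))).symm
      simp only [show ∀ a, toE (u k) a = u k a from fun a => rfl] at h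
      rw [huS' k] at h
      nlinarith [norm_nonneg (toE (u k)), h]
    set lam : ℂ := ((tensorPoly H u).re : ℂ) with hlam
    have heig : ∀ k, modeMap H u k (toE (u k)) = lam • toE (u k) := by
      intro k
      have hSA := modeMap_symm H hH u k
      have hmin : IsMinOn (modeMap H u k).reApplyInnerSelf
          (Metric.sphere 0 ‖toE (u k)‖) (toE (u k)) := by
        rw [isMinOn_iff]
        intro v hv
        have hvn : ‖v‖ = 1 := by
          rw [mem_sphere_zero_iff_norm] at hv
          rw [hv, hukn k]
        have hvS : ∑ a, Complex.normSq (v a) = 1 := by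
          rw [euclid_normSq v, hvn]; norm_num
        have hupd : Function.update u k v ∈ Set.univ.pi T := by
          intro l _
          by_cases hlk : l = k
          · subst hlk; simpa [hT] using hvS
          · simpa [hT, Function.update_of_ne hlk] using huS' l
        have := humin hupd
        rw [reApply_eq, reApply_eq,
          show Function.update u k (toE (u k)) = u from Function.update_eq_self k u]
        exact this
      have hres := hSA.eq_smul_self_of_isLocalExtrOn (x₀ := toE (u k)) (Or.inl hmin.localize)
      rw [hres]
      congr 1
      show ((((modeMap H u k).rayleighQuotient (toE (u k)) : ℝ)) : ℂ) = lam
      rw [hlam]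
      norm_cast
      show (modeMap H u k).reApplyInnerSelf (toE (u k)) / ‖toE (u k)‖ ^ 2
        = (tensorPoly H u).re
      rw [reApply_eq, show Function.update u k (toE (u k)) = u from Function.update_eq_self k u, hukn k]
      norm_num
    have htuple : IsHermitianEigentuple H lam u := by
      refine ⟨huS', fun k a => ?_⟩
      rw [modeMap_self H u k a]
      have h' := congrArg (fun f => f a) (heig k)
      simpa [toE, PiLp.smul_apply] using h'
    have h0 := hev lam u htuple
    have h0' : 0 ≤ (tensorPoly H u).re := by rwa [hlam, Complex.zero_le_real] at h0
    have hle : (tensorPoly H u).re ≤ (tensorPoly H x).re :=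
      humin (fun k _ => hx k)
    rw [Complex.le_def]
    exact ⟨by simpa using le_trans h0' hle, by simp [hxim]⟩
end

section
/- Every Hermitian tensor H of order 2m on ℂ^{n_1} ⊗ ⋯ ⊗ ℂ^{n_m} is Hermitian decomposable: there exist r ∈ ℕ, real numbers λ_1,…,λ_r, and unit vectors u_i^{(k)} ∈ ℂ^{n_k} (i = 1,…,r, k = 1,…,m) such that H = Σ_{i=1}^r λ_i · u_i^{(1)} ⊗ ⋯ ⊗ u_i^{(m)} ⊗ u_i^{(1)*} ⊗ ⋯ ⊗ u_i^{(m)*}. -/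
/-!
By polarization, every outer product `x y*` is a complex combination of four matrices `z z*`,
and normalizing `z` shows that the rank-one projections onto unit vectors span all matrices
over `ℂ`. The elementary tensors are Kronecker products over `k` of elementary matrices, so
expanding products of sums shows that the rank-one Hermitian product tensors span all tensors.
These spanning tensors are self-adjoint, so for Hermitian `H = ∑ cₜ Pₜ` taking real parts gives
`H = ∑ (Re cₜ) Pₜ`.
-/

open Matrix Submodule ComplexStarModule

section StarModule

variable {A : Type*} [AddCommGroup A] [Module ℂ A] [StarAddMonoid A] [StarModule ℂ A]

theorem mem_span_real_of_mem_span_complex {S : Set A} (hS : ∀ s ∈ S, IsSelfAdjoint s) {a : A}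
    (ha : IsSelfAdjoint a) (h : a ∈ span ℂ S) : a ∈ span ℝ S := by
  -- `ℜ (z • x)` involves `ℑ x`, so both parts have to be carried through the induction.
  suffices ∀ x ∈ span ℂ S, (ℜ x : A) ∈ span ℝ S ∧ (ℑ x : A) ∈ span ℝ S from
    ha.coe_realPart ▸ (this a h).1
  intro x hx
  induction hx using span_induction with
  | mem s hs => simpa [(hS s hs).coe_realPart, (hS s hs).imaginaryPart] using subset_span hs
  | zero => simp
  | add x y _ _ hx hy => simpa using ⟨add_mem hx.1 hy.1, add_mem hx.2 hy.2⟩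
  | smul z x _ hx =>
    rw [realPart_smul, imaginaryPart_smul]
    simp only [AddSubgroupClass.coe_sub, AddMemClass.coe_add, selfAdjoint.val_smul]
    exact ⟨sub_mem (smul_mem _ _ hx.1) (smul_mem _ _ hx.2),
      add_mem (smul_mem _ _ hx.2) (smul_mem _ _ hx.1)⟩

end StarModule

section PiKronecker

variable {R : Type*} [CommSemiring R] {κ : Type*} [Fintype κ] {ι : κ → Type*}

def piKronecker (A : ∀ k, Matrix (ι k) (ι k) R) : Matrix (∀ k, ι k) (∀ k, ι k) R :=
  of fun i j => ∏ k, A k (i k) (j k)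

theorem piKronecker_apply (A : ∀ k, Matrix (ι k) (ι k) R) (i j : ∀ k, ι k) :
    piKronecker A i j = ∏ k, A k (i k) (j k) := rfl

theorem conjTranspose_piKronecker [StarRing R] (A : ∀ k, Matrix (ι k) (ι k) R) :
    (piKronecker A)ᴴ = piKronecker fun k => (A k)ᴴ := by
  ext i j
  simp [piKronecker_apply, star_prod]

theorem IsHermitian.piKronecker [StarRing R] {A : ∀ k, Matrix (ι k) (ι k) R}
    (hA : ∀ k, (A k).IsHermitian) : (piKronecker A).IsHermitian := by
  simp only [IsHermitian, conjTranspose_piKronecker, fun k => (hA k).eq]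

theorem piKronecker_single [∀ k, DecidableEq (ι k)] (i j : ∀ k, ι k) :
    piKronecker (fun k => single (i k) (j k) (1 : R)) = single i j 1 := by
  ext i' j'
  simp [piKronecker_apply, single_apply, Fintype.prod_boole, funext_iff, forall_and]

theorem piKronecker_mem_span {S : ∀ k, Set (Matrix (ι k) (ι k) R)}
    {A : ∀ k, Matrix (ι k) (ι k) R} (hA : ∀ k, A k ∈ span R (S k)) :
    piKronecker A ∈ span R (piKronecker '' Set.univ.pi S) := by
  classical
  choose r c g hg using fun k => mem_span_set'.mp (hA k)
  have hexpand : piKronecker A = ∑ σ : ∀ k, Fin (r k),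
      (∏ k, c k (σ k)) • piKronecker fun k => (g k (σ k) : Matrix (ι k) (ι k) R) := by
    ext i j
    simp only [piKronecker_apply, ← hg, Matrix.sum_apply, Matrix.smul_apply, smul_eq_mul,
      Finset.prod_mul_distrib, Fintype.prod_sum]
  rw [hexpand]
  exact sum_mem fun σ _ => smul_mem _ _ (subset_span ⟨_, fun k _ => (g k (σ k)).2, rfl⟩)

theorem span_piKronecker_eq_top [∀ k, Fintype (ι k)] {S : ∀ k, Set (Matrix (ι k) (ι k) R)}
    (hS : ∀ k, span R (S k) = ⊤) : span R (piKronecker '' Set.univ.pi S) = ⊤ := by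
  classical
  refine eq_top_iff.2 fun M _ => ?_
  rw [matrix_eq_sum_single M]
  refine sum_mem fun i _ => sum_mem fun j _ => ?_
  rw [← mul_one (M i j), ← smul_eq_mul, ← smul_single, ← piKronecker_single]
  exact smul_mem _ _ (piKronecker_mem_span fun k => hS k ▸ mem_top)

end PiKronecker

section RankOneProjections

open Complex ComplexConjugate

variable {ι : Type*}

theorem vecMulVec_star_polarization (x y : ι → ℂ) :
    vecMulVec x (star y) = (1 / 2 : ℂ) • vecMulVec (x + y) (star (x + y))
      + (I / 2) • vecMulVec (x + I • y) (star (x + I • y))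
      - ((1 + I) / 2) • (vecMulVec x (star x) + vecMulVec y (star y)) := by
  ext a b
  simp only [vecMulVec_apply, Matrix.add_apply, Matrix.sub_apply, Matrix.smul_apply, Pi.add_apply,
    Pi.smul_apply, Pi.star_apply, smul_eq_mul, star_add, star_mul', Complex.star_def, conj_I]
  linear_combination (x a * conj (y b) / 2 - y a * conj (x b) / 2 + y a * conj (y b) * I / 2) * I_sq

variable [Fintype ι]

variable (ι) in
def rankOneProjections : Set (Matrix ι ι ℂ) :=
  {P | ∃ x : ι → ℂ, ∑ a, normSq (x a) = 1 ∧ vecMulVec x (star x) = P}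

theorem vecMulVec_star_self_mem_span (x : ι → ℂ) :
    vecMulVec x (star x) ∈ span ℂ (rankOneProjections ι) := by
  obtain rfl | hx := eq_or_ne x 0
  · simp
  set s := ∑ a, normSq (x a)
  have hs : 0 < s := by
    obtain ⟨a, ha⟩ := Function.ne_iff.mp hx
    exact (normSq_pos.mpr ha).trans_le
      (Finset.single_le_sum (fun b _ => normSq_nonneg (x b)) (Finset.mem_univ a))
  set c : ℂ := (Real.sqrt s : ℂ)
  have hc : c ≠ 0 := ofReal_ne_zero.mpr (Real.sqrt_pos.mpr hs).ne'
  have hcs : star c = c := conj_ofReal _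
  have hcc : (s : ℂ) = c * c := by rw [← ofReal_mul, Real.mul_self_sqrt hs.le]
  have hunit : ∑ a, normSq ((c⁻¹ • x) a) = 1 := by
    simp only [Pi.smul_apply, smul_eq_mul, normSq_mul, normSq_inv, c, normSq_ofReal,
      Real.mul_self_sqrt hs.le, ← Finset.mul_sum]
    exact inv_mul_cancel₀ hs.ne'
  have hscale : vecMulVec x (star x) = (s : ℂ) • vecMulVec (c⁻¹ • x) (star (c⁻¹ • x)) := by
    ext a b
    simp only [vecMulVec_apply, Matrix.smul_apply, Pi.smul_apply, Pi.star_apply, smul_eq_mul,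
      star_mul', star_inv₀, hcs, hcc]
    field_simp
  rw [hscale]
  exact smul_mem _ _ (subset_span ⟨_, hunit, rfl⟩)

theorem span_rankOneProjections : span ℂ (rankOneProjections ι) = ⊤ := by
  classical
  refine eq_top_iff.2 fun M _ => ?_
  rw [matrix_eq_sum_single M]
  refine sum_mem fun i _ => sum_mem fun j _ => ?_
  rw [← mul_one (M i j), ← smul_eq_mul, ← smul_single, single_eq_single_vecMulVec_single]
  refine smul_mem _ _ ?_
  rw [show (Pi.single j 1 : ι → ℂ) = star (Pi.single j 1) by simp, vecMulVec_star_polarization]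
  exact sub_mem (add_mem (smul_mem _ _ (vecMulVec_star_self_mem_span _))
    (smul_mem _ _ (vecMulVec_star_self_mem_span _))) (smul_mem _ _
      (add_mem (vecMulVec_star_self_mem_span _) (vecMulVec_star_self_mem_span _)))

end RankOneProjections

/-- Every Hermitian tensor `H` is Hermitian decomposable: it is a
real linear combination of rank-one Hermitian tensors
`uᵢ⁽¹⁾ ⊗ ⋯ ⊗ uᵢ⁽ᵐ⁾ ⊗ uᵢ⁽¹⁾* ⊗ ⋯ ⊗ uᵢ⁽ᵐ⁾*` with unit vectors `uᵢ⁽ᵏ⁾`. -/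
theorem stmt_14 {m : ℕ} {n : Fin m → ℕ}
    (H : ((k : Fin m) → Fin (n k)) → ((k : Fin m) → Fin (n k)) → ℂ)
    (hH : ∀ i j, H i j = starRingEnd ℂ (H j i)) :
    ∃ (r : ℕ) (lam : Fin r → ℝ) (u : Fin r → (k : Fin m) → Fin (n k) → ℂ),
      (∀ (t : Fin r) (k : Fin m), ∑ a, Complex.normSq (u t k a) = 1) ∧
      ∀ i j, H i j = ∑ t : Fin r,
        (lam t : ℂ) * ((∏ k, u t k (i k)) * ∏ k, starRingEnd ℂ (u t k (j k))) := by
  set S := piKronecker '' Set.univ.pi fun k => rankOneProjections (Fin (n k))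
  have hS_selfAdjoint : ∀ P ∈ S, IsSelfAdjoint P := by
    rintro _ ⟨A, hA, rfl⟩
    refine IsHermitian.piKronecker fun k => ?_
    obtain ⟨x, -, hx⟩ := hA k trivial
    rw [← hx, IsHermitian, conjTranspose_vecMulVec, star_star]
  have hHerm : (of H).IsHermitian := IsHermitian.ext fun i j => (hH i j).symm
  have hmem : of H ∈ span ℝ S := by
    refine mem_span_real_of_mem_span_complex hS_selfAdjoint hHerm ?_
    rw [span_piKronecker_eq_top fun k => span_rankOneProjections]
    trivial
  obtain ⟨r, lam, P, hP⟩ := mem_span_set'.mp hmem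
  choose A hA hAP using fun t => (P t).2
  choose u hu hvu using fun t k => hA t k trivial
  refine ⟨r, lam, u, hu, fun i j => ?_⟩
  rw [← of_apply H i j, ← hP]
  simp only [Matrix.sum_apply, Matrix.smul_apply, ← hAP, piKronecker_apply, ← hvu, vecMulVec_apply,
    Pi.star_apply, Complex.star_def, Finset.prod_mul_distrib, Complex.real_smul]
end

section
/- (Hughston–Jozsa–Wootters) Let u_1,…,u_s ∈ ℂ^n be pairwise orthogonal nonzero vectors and let v_1,…,v_r ∈ ℂ^n be vectors such that Σ_{i=1}^s u_i u_i^† = Σ_{j=1}^r v_j v_j^† as n×n matrices. Let U be the n×s matrix with columns u_1,…,u_s and V the n×r matrix with columns v_1,…,v_r. Then r ≥ s and there exists an s×r matrix Q with Q Q^† = I_{s×s} such that V = U Q. -/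
/-!
Let `G = U†U`, invertible because the columns of `U` are orthogonal and nonzero, and put
`Q = G⁻¹U†V`. Then `QQ† = G⁻¹U†(VV†)UG⁻¹ = G⁻¹U†(UU†)UG⁻¹ = 1`. With `P = UG⁻¹U†` one has
`(1 - P)U = 0`, so `(1 - P)VV† = (1 - P)UU† = 0`, which forces `(1 - P)V = 0`, i.e. `V = UQ`.
Finally `QQ† = 1` bounds the rank of the `s × r` matrix `Q` below by `s`, so `s ≤ r`.
-/

namespace Matrix

variable {𝕜 : Type*} [Field 𝕜] {m n p : Type*} [Fintype m] [Fintype n] [Fintype p]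
  [DecidableEq m]

theorem card_le_card_of_mul_eq_one {A : Matrix m n 𝕜} {B : Matrix n m 𝕜} (h : A * B = 1) :
    Fintype.card m ≤ Fintype.card n :=
  calc Fintype.card m = (A * B).rank := by rw [h, rank_one]
    _ ≤ A.rank := rank_mul_le_left A B
    _ ≤ Fintype.card n := rank_le_card_width A

variable [StarRing 𝕜] [PartialOrder 𝕜] [StarOrderedRing 𝕜]

theorem exists_mul_conjTranspose_eq_one_of_mul_conjTranspose_eq [DecidableEq p]
    {U : Matrix p m 𝕜} {V : Matrix p n 𝕜} (hUV : U * Uᴴ = V * Vᴴ) (hU : IsUnit (Uᴴ * U).det) :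
    ∃ Q : Matrix m n 𝕜, Q * Qᴴ = 1 ∧ V = U * Q := by
  set G := Uᴴ * U with hG
  have hGG : G⁻¹ * G = 1 := nonsing_inv_mul G hU
  have hGh : Gᴴ = G := by rw [hG, conjTranspose_mul, conjTranspose_conjTranspose]
  refine ⟨G⁻¹ * Uᴴ * V, ?_, ?_⟩
  · calc G⁻¹ * Uᴴ * V * (G⁻¹ * Uᴴ * V)ᴴ = G⁻¹ * (Uᴴ * (V * Vᴴ) * U) * (Gᴴ)⁻¹ := by
          simp only [conjTranspose_mul, conjTranspose_conjTranspose, conjTranspose_nonsing_inv,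
            Matrix.mul_assoc]
      _ = G⁻¹ * G * (G * G⁻¹) := by rw [← hUV, hGh, hG]; simp only [Matrix.mul_assoc]
      _ = 1 := by rw [hGG, mul_nonsing_inv G hU, Matrix.mul_one]
  · have hPU : (1 - U * G⁻¹ * Uᴴ) * U = 0 := by
      rw [Matrix.sub_mul, Matrix.one_mul, Matrix.mul_assoc, ← hG, Matrix.mul_assoc, hGG,
        Matrix.mul_one, sub_self]
    have hPV : (1 - U * G⁻¹ * Uᴴ) * V = 0 := by
      rw [← mul_self_mul_conjTranspose_eq_zero, ← hUV, ← Matrix.mul_assoc, hPU,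
        Matrix.zero_mul]
    rw [Matrix.sub_mul, Matrix.one_mul, sub_eq_zero] at hPV
    simpa only [Matrix.mul_assoc] using hPV

theorem isUnit_det_conjTranspose_mul_self_of_pairwise_orthogonal {U : Matrix p m 𝕜}
    (hU0 : ∀ i, Uᵀ i ≠ 0) (horth : Pairwise fun i j => star (Uᵀ i) ⬝ᵥ Uᵀ j = 0) :
    IsUnit (Uᴴ * U).det := by
  have hdiag : Uᴴ * U = diagonal fun i => star (Uᵀ i) ⬝ᵥ Uᵀ i := by
    ext i j
    rcases eq_or_ne i j with rfl | hij
    · simp [mul_apply, dotProduct]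
    · simpa [mul_apply, dotProduct, hij] using horth hij
  rw [hdiag, det_diagonal, isUnit_iff_ne_zero, Finset.prod_ne_zero_iff]
  exact fun i _ => dotProduct_star_self_eq_zero.not.mpr (hU0 i)

end Matrix

open scoped ComplexOrder

/-- Hughston–Jozsa–Wootters: if pairwise orthogonal nonzero vectors
`u₁, …, u_s ∈ ℂⁿ` and vectors `v₁, …, v_r ∈ ℂⁿ` satisfy
`Σᵢ uᵢuᵢ† = Σⱼ vⱼvⱼ†`, then `r ≥ s` and there is an `s × r` matrix `Q` with
`Q Q† = I` such that `V = U Q`, where `U, V` have columns `uᵢ`, `vⱼ`. -/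
theorem stmt_18 {n s r : ℕ}
    (u : Fin s → Fin n → ℂ) (v : Fin r → Fin n → ℂ)
    (hu0 : ∀ i, u i ≠ 0)
    (horth : ∀ i j, i ≠ j → (∑ a, starRingEnd ℂ (u i a) * u j a) = 0)
    (hsum : ∀ a b, (∑ i, u i a * starRingEnd ℂ (u i b)) =
      ∑ j, v j a * starRingEnd ℂ (v j b)) :
    s ≤ r ∧ ∃ Q : Matrix (Fin s) (Fin r) ℂ,
      Q * Q.conjTranspose = 1 ∧
      Matrix.of (fun a j => v j a) = Matrix.of (fun a i => u i a) * Q := by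
  set U : Matrix (Fin n) (Fin s) ℂ := Matrix.of fun a i => u i a
  set V : Matrix (Fin n) (Fin r) ℂ := Matrix.of fun a j => v j a
  have hUV : U * U.conjTranspose = V * V.conjTranspose := by
    ext a b
    simpa [U, V, Matrix.mul_apply] using hsum a b
  obtain ⟨Q, hQ, hVUQ⟩ := Matrix.exists_mul_conjTranspose_eq_one_of_mul_conjTranspose_eq hUV
    (Matrix.isUnit_det_conjTranspose_mul_self_of_pairwise_orthogonal hu0 horth)
  refine ⟨?_, Q, hQ, hVUQ⟩
  simpa using Matrix.card_le_card_of_mul_eq_one hQ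
end
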